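/- arXiv:1907.04115 — 2 statements merged into one kernel-verified Lean document; each statement's English description precedes it below -/
import Mathlib

section
/- For any function u : [0,1] → ℝ of bounded variation and any N ≥ 1, the total variation of the Bernstein polynomial B_N[u] on [0,1] is at most the total variation of u on [0,1]; i.e., ∫_0^1 |B_N'[u](x)| dx ≤ TV(u). (The Bernstein reconstruction is total variation diminishing.) -/
open Finset

noncomputable def bernsteinOp (N : ℕ) (u : ℝ → ℝ) (x : ℝ) : ℝ :=
  ∑ n ∈ Finset.range (N + 1), u (n / N) * (N.choose n) * x ^ n * (1 - x) ^ (N - n)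

/-!
Differentiating the Bernstein basis gives
`B_N'[u] = N ∑_{ν<N} (u((ν+1)/N) - u(ν/N)) b_{N-1,ν}`. The polynomials `b_{N-1,ν}` are nonnegative
on `[0,1]` and `N b_{N-1,ν}` has integral `1`, so `∫₀¹ |B_N'[u]|` is at most the variation of `u`
along the uniform partition of `[0,1]` of mesh `1/N`.
-/

open Polynomial

namespace bernsteinPolynomial

section CommRing

variable {R : Type*} [CommRing R]

theorem eval_eq (n ν : ℕ) (x : R) :
    (bernsteinPolynomial R n ν).eval x = n.choose ν * x ^ ν * (1 - x) ^ (n - ν) := by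
  simp [bernsteinPolynomial]

theorem eval_nonneg [LinearOrder R] [IsStrictOrderedRing R] (n ν : ℕ) {x : R}
    (hx : x ∈ Set.Icc 0 1) : 0 ≤ (bernsteinPolynomial R n ν).eval x := by
  obtain ⟨hx0, hx1⟩ := hx
  have : 0 ≤ 1 - x := sub_nonneg.2 hx1
  rw [eval_eq]
  positivity

theorem derivative_sum_smul (n : ℕ) (a : ℕ → R) :
    derivative (∑ ν ∈ range (n + 1), a ν • bernsteinPolynomial R n ν) =
      (n : R[X]) * ∑ ν ∈ range n, (a (ν + 1) - a ν) • bernsteinPolynomial R (n - 1) ν := by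
  rcases n with _ | n
  · simp [bernsteinPolynomial]
  have shift : ∑ ν ∈ range (n + 1), a (ν + 1) • bernsteinPolynomial R n (ν + 1)
      + a 0 • bernsteinPolynomial R n 0 = ∑ ν ∈ range (n + 1), a ν • bernsteinPolynomial R n ν := by
    rw [← sum_range_succ' (fun ν => a ν • bernsteinPolynomial R n ν), sum_range_succ,
      eq_zero_of_lt R (Nat.lt_succ_self n), smul_zero, add_zero]
  rw [derivative_sum, sum_range_succ']
  simp only [derivative_smul, derivative_succ, derivative_zero, Nat.add_sub_cancel]
  simp only [Polynomial.smul_eq_C_mul] at shift ⊢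
  simp only [map_sub, mul_sub, sub_mul, mul_neg, neg_mul, sum_sub_distrib, mul_left_comm (C _),
    ← mul_sum]
  linear_combination -(↑(n + 1) : R[X]) * shift

end CommRing

/-- `(n + 1) b_{n,ν}` is the derivative of `∑_{j > ν} b_{n+1,j}`, which vanishes at `0` and is
`1` at `1`. -/
theorem integral_eval (n ν : ℕ) (h : ν ≤ n) :
    ∫ x in (0 : ℝ)..1, (bernsteinPolynomial ℝ n ν).eval x = 1 / (n + 1) := by
  set F := ∑ j ∈ range (n + 2), (if ν < j then (1 : ℝ) else 0) • bernsteinPolynomial ℝ (n + 1) j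
  have hF : derivative F = (n + 1 : ℝ[X]) * bernsteinPolynomial ℝ n ν := by
    have hcoeff : ∀ j, ((if ν < j + 1 then (1 : ℝ) else 0) - if ν < j then 1 else 0)
        = if j = ν then 1 else 0 := by
      intro j; split_ifs <;> norm_num <;> omega
    rw [derivative_sum_smul]
    simp only [hcoeff, ite_smul, one_smul, zero_smul, sum_ite_eq', mem_range, Nat.lt_succ_of_le h]
    push_cast
    simp
  have hFTC := intervalIntegral.integral_eq_sub_of_hasDerivAt (fun x _ => F.hasDerivAt x)
    (F.derivative.continuous.intervalIntegrable 0 1)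
  have hF1 : F.eval 1 = 1 := by
    simp only [F, eval_finsetSum, eval_smul, eval_at_1, smul_eq_mul, mul_ite, mul_one, mul_zero]
    simp [Nat.lt_succ_of_le h]
  have hF0 : F.eval 0 = 0 := by
    simp only [F, eval_finsetSum, eval_smul, eval_at_0, smul_eq_mul, mul_ite, mul_one, mul_zero]
    simp
  rw [hF, hF1, hF0] at hFTC
  simp only [eval_mul, eval_add, eval_natCast, eval_one, intervalIntegral.integral_const_mul] at hFTC
  field_simp
  linarith

end bernsteinPolynomial

open bernsteinPolynomial

theorem bernsteinOp_eq_eval (N : ℕ) (u : ℝ → ℝ) :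
    bernsteinOp N u =
      fun x => (∑ ν ∈ range (N + 1), u (ν / N) • bernsteinPolynomial ℝ N ν).eval x := by
  ext x
  simp [bernsteinOp, eval_finsetSum, eval_eq, mul_assoc]

theorem hasDerivAt_bernsteinOp (N : ℕ) (u : ℝ → ℝ) (x : ℝ) :
    HasDerivAt (bernsteinOp N u)
      (N * ∑ ν ∈ range N,
        (u ((ν + 1 : ℕ) / N) - u (ν / N)) * (bernsteinPolynomial ℝ (N - 1) ν).eval x) x := by
  rw [bernsteinOp_eq_eval]
  refine (Polynomial.hasDerivAt _ x).congr_deriv ?_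
  rw [derivative_sum_smul]
  simp [eval_finsetSum]

theorem integral_abs_deriv_bernsteinOp_le (N : ℕ) (u : ℝ → ℝ) :
    ∫ x in (0 : ℝ)..1, |deriv (bernsteinOp N u) x| ≤
      ∑ ν ∈ range N, |u ((ν + 1 : ℕ) / N) - u (ν / N)| := by
  set Δ : ℕ → ℝ := fun ν => u ((ν + 1 : ℕ) / N) - u (ν / N)
  have hderiv : ∀ x, deriv (bernsteinOp N u) x =
      N * ∑ ν ∈ range N, Δ ν * (bernsteinPolynomial ℝ (N - 1) ν).eval x :=
    fun x => (hasDerivAt_bernsteinOp N u x).deriv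
  have hpointwise : ∀ x ∈ Set.Icc (0 : ℝ) 1, |deriv (bernsteinOp N u) x| ≤
      ∑ ν ∈ range N, |Δ ν| * (N * (bernsteinPolynomial ℝ (N - 1) ν).eval x) := by
    intro x hx
    rw [hderiv, mul_sum]
    refine (abs_sum_le_sum_abs _ _).trans (sum_le_sum fun ν _ => ?_)
    rw [abs_mul, abs_mul, abs_of_nonneg (Nat.cast_nonneg N), abs_of_nonneg (eval_nonneg _ _ hx)]
    exact (mul_left_comm _ _ _).le
  have hmass : ∀ ν ∈ range N,
      ∫ x in (0 : ℝ)..1, N * (bernsteinPolynomial ℝ (N - 1) ν).eval x = 1 := by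
    intro ν hν
    have hνN := mem_range.1 hν
    rw [intervalIntegral.integral_const_mul, integral_eval _ _ (Nat.le_sub_one_of_lt hνN),
      Nat.cast_sub (by omega), Nat.cast_one, sub_add_cancel]
    exact mul_one_div_cancel (Nat.cast_ne_zero.2 (by omega))
  calc ∫ x in (0 : ℝ)..1, |deriv (bernsteinOp N u) x|
      ≤ ∫ x in (0 : ℝ)..1,
          ∑ ν ∈ range N, |Δ ν| * (N * (bernsteinPolynomial ℝ (N - 1) ν).eval x) := by
        refine intervalIntegral.integral_mono_on zero_le_one ?_ ?_ hpointwise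
        · simp only [hderiv]; exact Continuous.intervalIntegrable (by fun_prop) _ _
        · exact Continuous.intervalIntegrable (by fun_prop) _ _
    _ = ∑ ν ∈ range N, |Δ ν| := by
        rw [intervalIntegral.integral_finsetSum fun ν _ =>
          Continuous.intervalIntegrable (by fun_prop) _ _]
        refine sum_congr rfl fun ν hν => ?_
        rw [intervalIntegral.integral_const_mul, hmass ν hν, mul_one]

theorem sum_edist_uniform_le_eVariationOn {E : Type*} [PseudoEMetricSpace E] (u : ℝ → E) (N : ℕ) :
    ∑ ν ∈ range N, edist (u ((ν + 1 : ℕ) / N)) (u (ν / N)) ≤ eVariationOn u (Set.Icc 0 1) :=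
  eVariationOn.sum_le_of_monotoneOn_Iic (u := fun i : ℕ => (i : ℝ) / N)
    (fun _ _ _ _ hij => div_le_div_of_nonneg_right (Nat.cast_le.2 hij) (Nat.cast_nonneg N))
    fun i hi => ⟨by positivity, div_le_one_of_le₀ (Nat.cast_le.2 hi) (Nat.cast_nonneg N)⟩

theorem bernstein_TVD_general (u : ℝ → ℝ) (N : ℕ) :
    ENNReal.ofReal (∫ x in (0:ℝ)..1, |deriv (bernsteinOp N u) x|) ≤
      eVariationOn u (Set.Icc (0:ℝ) 1) :=
  calc ENNReal.ofReal (∫ x in (0:ℝ)..1, |deriv (bernsteinOp N u) x|)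
      ≤ ENNReal.ofReal (∑ ν ∈ range N, |u ((ν + 1 : ℕ) / N) - u (ν / N)|) :=
        ENNReal.ofReal_le_ofReal (integral_abs_deriv_bernsteinOp_le N u)
    _ = ∑ ν ∈ range N, edist (u ((ν + 1 : ℕ) / N)) (u (ν / N)) := by
        rw [ENNReal.ofReal_sum_of_nonneg fun _ _ => abs_nonneg _]
        simp only [edist_dist, Real.dist_eq]
    _ ≤ eVariationOn u (Set.Icc 0 1) := sum_edist_uniform_le_eVariationOn u N

theorem bernstein_TVD (u : ℝ → ℝ) (hu : BoundedVariationOn u (Set.Icc (0:ℝ) 1))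
    (N : ℕ) (hN : 1 ≤ N) :
    ENNReal.ofReal (∫ x in (0:ℝ)..1, |deriv (bernsteinOp N u) x|) ≤
      eVariationOn u (Set.Icc (0:ℝ) 1) :=
  bernstein_TVD_general u N
end

section
/- If u : [0,1] → ℝ is continuous and convex, then the sequence of Bernstein polynomials decreases monotonically to u: for all N ≥ 1 and x in [0,1], B_N[u](x) ≥ B_{N+1}[u](x) ≥ u(x). -/
/-!
Both inequalities are Jensen's inequality for `u`. The values at `x` of the Bernstein basis
polynomials of degree `N` are probability weights on the nodes `n / N` with mean `x`, which gives
`u x ≤ B_N u x`. For the monotonicity, multiplying `B_N u x` by `x + (1 - x) = 1` (degree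
elevation) writes it in the degree `N + 1` basis, where the coefficient of `x^(k+1) (1-x)^(N-k)`
is `C(N,k) u(k/N) + C(N,k+1) u((k+1)/N)`, while that of `B_{N+1} u x` is
`C(N+1,k+1) u((k+1)/(N+1))`. Since `C(N,k)` and `C(N,k+1)` are `C(N+1,k+1)` times
`(k+1)/(N+1)` and `(N-k)/(N+1)`, and these weights average `k/N` and `(k+1)/N` to
`(k+1)/(N+1)`, convexity compares the coefficients term by term.
-/

open Finset

section HomogeneousSums

variable {R : Type*} [CommRing R] (a b : R) (N : ℕ)

theorem sum_range_add_two_mul_pow_mul_pow (d : ℕ → R) :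
    ∑ n ∈ range (N + 2), d n * a ^ n * b ^ (N + 1 - n) =
      d 0 * b ^ (N + 1) + ∑ k ∈ range N, d (k + 1) * a ^ (k + 1) * b ^ (N - k)
        + d (N + 1) * a ^ (N + 1) := by
  rw [sum_range_succ, sum_range_succ', add_comm (∑ _ ∈ _, _)]
  simp

theorem add_mul_sum_range_mul_pow_mul_pow (c : ℕ → R) :
    (a + b) * ∑ n ∈ range (N + 1), c n * a ^ n * b ^ (N - n) =
      c 0 * b ^ (N + 1) + ∑ k ∈ range N, (c k + c (k + 1)) * a ^ (k + 1) * b ^ (N - k)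
        + c N * a ^ (N + 1) := by
  have hhigh : ∑ n ∈ range (N + 1), c n * a ^ n * b ^ (N - n) * a =
      ∑ k ∈ range N, c k * a ^ (k + 1) * b ^ (N - k) + c N * a ^ (N + 1) := by
    rw [sum_range_succ]
    simp only [Nat.sub_self, pow_zero, pow_succ]
    congr 1
    · exact sum_congr rfl fun k _ => by ring
    · ring
  have hlow : ∑ n ∈ range (N + 1), c n * a ^ n * b ^ (N - n) * b =
      c 0 * b ^ (N + 1) + ∑ k ∈ range N, c (k + 1) * a ^ (k + 1) * b ^ (N - k) := by
    rw [sum_range_succ', add_comm]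
    congr 1
    · simp [pow_succ, mul_assoc]
    · refine sum_congr rfl fun k hk => ?_
      rw [mul_assoc, ← pow_succ, Nat.sub_add_eq,
        Nat.sub_add_cancel (Nat.sub_pos_of_lt (mem_range.1 hk))]
  rw [add_mul, mul_comm a, mul_comm b, sum_mul, sum_mul, hhigh, hlow]
  simp only [add_mul, sum_add_distrib]
  ring

end HomogeneousSums

theorem sum_eval_bernsteinPolynomial (N : ℕ) (x : ℝ) :
    ∑ n ∈ range (N + 1), (bernsteinPolynomial ℝ N n).eval x = 1 := by
  simpa [Polynomial.eval_finsetSum] using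
    congrArg (Polynomial.eval x) (bernsteinPolynomial.sum ℝ N)

theorem sum_eval_bernsteinPolynomial_mul_div {N : ℕ} (hN : N ≠ 0) (x : ℝ) :
    ∑ n ∈ range (N + 1), (bernsteinPolynomial ℝ N n).eval x * (n / N) = x := by
  have hmean := congrArg (Polynomial.eval x) (bernsteinPolynomial.sum_smul ℝ N)
  simp only [Polynomial.eval_finsetSum, nsmul_eq_mul, Polynomial.eval_mul,
    Polynomial.eval_natCast, Polynomial.eval_X] at hmean
  simp_rw [mul_div_assoc', ← sum_div, mul_comm _ ((_ : ℕ) : ℝ), hmean]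
  field_simp

theorem eval_bernsteinPolynomial_nonneg (N n : ℕ) {x : ℝ} (hx : x ∈ Set.Icc (0 : ℝ) 1) :
    0 ≤ (bernsteinPolynomial ℝ N n).eval x := by
  have : 0 ≤ 1 - x := sub_nonneg.2 hx.2
  simp only [bernsteinPolynomial, Polynomial.eval_mul, Polynomial.eval_pow, Polynomial.eval_sub,
    Polynomial.eval_one, Polynomial.eval_X, Polynomial.eval_natCast]
  have hx0 := hx.1
  positivity

theorem bernsteinOp_eq_sum_eval_mul (N : ℕ) (u : ℝ → ℝ) (x : ℝ) :
    bernsteinOp N u x =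
      ∑ n ∈ range (N + 1), (bernsteinPolynomial ℝ N n).eval x * u (n / N) := by
  refine sum_congr rfl fun n _ => ?_
  simp only [bernsteinPolynomial, Polynomial.eval_mul, Polynomial.eval_pow, Polynomial.eval_sub,
    Polynomial.eval_one, Polynomial.eval_X, Polynomial.eval_natCast]
  ring

theorem div_natCast_mem_Icc {n N : ℕ} (h : n ≤ N) : (n / N : ℝ) ∈ Set.Icc (0 : ℝ) 1 :=
  ⟨by positivity, div_le_one_of_le₀ (by exact_mod_cast h) (by positivity)⟩

namespace ConvexOn

variable {u : ℝ → ℝ} (hconv : ConvexOn ℝ (Set.Icc (0 : ℝ) 1) u)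
include hconv

theorem le_bernsteinOp {N : ℕ} (hN : N ≠ 0) {x : ℝ} (hx : x ∈ Set.Icc (0 : ℝ) 1) :
    u x ≤ bernsteinOp N u x := by
  have hjensen := hconv.map_sum_le (t := range (N + 1))
    (fun n _ => eval_bernsteinPolynomial_nonneg N n hx) (sum_eval_bernsteinPolynomial N x)
    (fun n hn => div_natCast_mem_Icc (Nat.lt_succ_iff.1 (mem_range.1 hn)))
  simp only [smul_eq_mul, sum_eval_bernsteinPolynomial_mul_div hN] at hjensen
  rwa [bernsteinOp_eq_sum_eval_mul]

theorem map_succ_div_succ_le {N k : ℕ} (hk : k < N) :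
    u ((k + 1) / (N + 1)) ≤
      (k + 1) / (N + 1) * u (k / N) + (N - k) / (N + 1) * u ((k + 1) / N) := by
  have hkN : (k : ℝ) < N := by exact_mod_cast hk
  have hN : (0 : ℝ) < N := (Nat.cast_nonneg k).trans_lt hkN
  have hnext : ((k : ℝ) + 1) / N ∈ Set.Icc (0 : ℝ) 1 := by
    exact_mod_cast div_natCast_mem_Icc (n := k + 1) hk
  have hmean : (k + 1) / (N + 1) * (k / N) + (N - k) / (N + 1) * ((k + 1) / N) =
      ((k + 1) / (N + 1) : ℝ) := by
    field_simp
    ring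
  have hsum : ((k : ℝ) + 1) / (N + 1) + (N - k) / (N + 1) = 1 := by
    field_simp
    ring
  have h := hconv.2 (div_natCast_mem_Icc hk.le) hnext (by positivity)
    (div_nonneg (sub_nonneg.2 hkN.le) (by positivity)) hsum
  simpa only [smul_eq_mul, hmean] using h

theorem choose_mul_map_succ_div_succ_le {N k : ℕ} (hk : k < N) :
    ((N + 1).choose (k + 1) : ℝ) * u ((k + 1) / (N + 1)) ≤
      N.choose k * u (k / N) + N.choose (k + 1) * u ((k + 1) / N) := by
  have hN : (N : ℝ) + 1 ≠ 0 := by positivity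
  have hleft : ((N + 1).choose (k + 1) : ℝ) * ((k + 1) / (N + 1)) = N.choose k := by
    rw [mul_div_assoc', div_eq_iff hN]
    exact_mod_cast (Nat.add_one_mul_choose_eq N k).symm.trans (mul_comm _ _)
  have hright : ((N + 1).choose (k + 1) : ℝ) * ((N - k) / (N + 1)) = N.choose (k + 1) := by
    rw [mul_div_assoc', div_eq_iff hN, ← Nat.cast_sub hk.le]
    have := Nat.choose_mul_succ_eq N (k + 1)
    rw [Nat.add_sub_add_right] at this
    exact_mod_cast this.symm
  calc ((N + 1).choose (k + 1) : ℝ) * u ((k + 1) / (N + 1))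
      ≤ (N + 1).choose (k + 1) *
          ((k + 1) / (N + 1) * u (k / N) + (N - k) / (N + 1) * u ((k + 1) / N)) :=
        mul_le_mul_of_nonneg_left (hconv.map_succ_div_succ_le hk) (Nat.cast_nonneg _)
    _ = N.choose k * u (k / N) + N.choose (k + 1) * u ((k + 1) / N) := by
        rw [mul_add, ← mul_assoc, ← mul_assoc, hleft, hright]

theorem bernsteinOp_succ_le {N : ℕ} (hN : N ≠ 0) {x : ℝ} (hx : x ∈ Set.Icc (0 : ℝ) 1) :
    bernsteinOp (N + 1) u x ≤ bernsteinOp N u x := by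
  set c : ℕ → ℝ := fun n => u (n / N) * N.choose n
  set d : ℕ → ℝ := fun m => u (m / (N + 1 : ℕ)) * (N + 1).choose m
  have hsucc : bernsteinOp (N + 1) u x = d 0 * (1 - x) ^ (N + 1)
      + ∑ k ∈ range N, d (k + 1) * x ^ (k + 1) * (1 - x) ^ (N - k) + d (N + 1) * x ^ (N + 1) :=
    sum_range_add_two_mul_pow_mul_pow x (1 - x) N d
  have helev : bernsteinOp N u x = c 0 * (1 - x) ^ (N + 1)
      + ∑ k ∈ range N, (c k + c (k + 1)) * x ^ (k + 1) * (1 - x) ^ (N - k)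
      + c N * x ^ (N + 1) := by
    rw [← add_mul_sum_range_mul_pow_mul_pow, add_sub_cancel, one_mul]
    rfl
  have hfirst : d 0 = c 0 := by simp [c, d]
  have hlast : d (N + 1) = c N := by simp [c, d, hN, Nat.cast_add_one_ne_zero]
  have h1x : 0 ≤ 1 - x := sub_nonneg.2 hx.2
  have hx0 := hx.1
  rw [hsucc, helev, hfirst, hlast]
  gcongr with k hk
  have hkey := hconv.choose_mul_map_succ_div_succ_le (mem_range.1 hk)
  simp only [c, d]
  push_cast
  linarith

end ConvexOn

theorem bernstein_convex_monotone_decreasing_to_u_general (u : ℝ → ℝ)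
    (hconv : ConvexOn ℝ (Set.Icc (0:ℝ) 1) u)
    (N : ℕ) (hN : 1 ≤ N) (x : ℝ) (hx : x ∈ Set.Icc (0:ℝ) 1) :
    bernsteinOp (N + 1) u x ≤ bernsteinOp N u x ∧ u x ≤ bernsteinOp (N + 1) u x :=
  ⟨hconv.bernsteinOp_succ_le (Nat.one_le_iff_ne_zero.1 hN) hx,
    hconv.le_bernsteinOp N.succ_ne_zero hx⟩

theorem bernstein_convex_monotone_decreasing_to_u (u : ℝ → ℝ)
    (hc : ContinuousOn u (Set.Icc (0:ℝ) 1)) (hconv : ConvexOn ℝ (Set.Icc (0:ℝ) 1) u)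
    (N : ℕ) (hN : 1 ≤ N) (x : ℝ) (hx : x ∈ Set.Icc (0:ℝ) 1) :
    bernsteinOp (N + 1) u x ≤ bernsteinOp N u x ∧ u x ≤ bernsteinOp (N + 1) u x :=
  bernstein_convex_monotone_decreasing_to_u_general u hconv N hN x hx
end
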